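/- arXiv:2507.03259 — 2 statements merged into one kernel-verified Lean document; each statement's English description precedes it below -/
import Mathlib

section
/- Let (K,≿) be a coalition formation problem with unrestricted preferences. If there exists an effective top-partition collection, then the myopic core is nonempty. -/
/-- A partition of the agent set `N`, encoded by the map sending each agent to her coalition. -/
structure Partn (N : Type*) where
  cell : N → Set N
  mem_cell : ∀ i, i ∈ cell i
  cell_eq : ∀ i j, j ∈ cell i → cell j = cell i

/-- Coalition `C` is formed in partition `π` (i.e. `C ∈ π`). -/
def Partn.HasCoal {N : Type*} (π : Partn N) (C : Set N) : Prop := ∃ i, π.cell i = C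

/-- `D(π,π')`: agents placed in different coalitions by `π` and `π'`. -/
def Partn.diff {N : Type*} (π π' : Partn N) : Set N := {i | π.cell i ≠ π'.cell i}

/-- A coalition formation problem: a set of admissible partitions together with
complete and transitive preferences of each agent over partitions. -/
structure CFP (N : Type*) where
  adm : Set (Partn N)
  pref : N → Partn N → Partn N → Prop
  total : ∀ i, ∀ π ∈ adm, ∀ π' ∈ adm, pref i π π' ∨ pref i π' π
  trans : ∀ i π π' π'', pref i π π' → pref i π' π'' → pref i π π''

namespace CFP
variable {N : Type*}

/-- Strict preference. -/
def spref (P : CFP N) (i : N) (π π' : Partn N) : Prop := P.pref i π π' ∧ ¬ P.pref i π' π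

/-- Unrestricted domain condition: indifference only between partitions leaving
the agent in the same coalition. -/
def NoTies (P : CFP N) : Prop :=
  ∀ i, ∀ π ∈ P.adm, ∀ π' ∈ P.adm, P.pref i π π' → P.pref i π' π → π.cell i = π'.cell i

/-- Order-preserving preferences. -/
def OrderPreserving (P : CFP N) : Prop :=
  P.NoTies ∧
  ∀ i, ∀ π ∈ P.adm, ∀ π' ∈ P.adm, ∀ τ ∈ P.adm, ∀ τ' ∈ P.adm,
    π.cell i ≠ π'.cell i → P.spref i π π' →
    τ.cell i = π.cell i → τ'.cell i = π'.cell i → P.spref i τ τ'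

/-- `π` is myopically blocked by coalition `C` via `π'`. -/
def Blocks (P : CFP N) (C : Set N) (π π' : Partn N) : Prop :=
  π ∈ P.adm ∧ π' ∈ P.adm ∧ C.Nonempty ∧
  (∀ i ∈ C, P.pref i π' π) ∧
  (∃ j ∈ C, P.spref j π' π) ∧
  (∀ j, j ∉ C → (π.cell j ∩ C).Nonempty → π'.cell j = {j}) ∧
  (∀ j, π.cell j ∩ C = ∅ → π'.cell j = π.cell j)

/-- The (myopic) core. -/
def Core (P : CFP N) : Set (Partn N) :=
  {π | π ∈ P.adm ∧ ¬ ∃ C π', P.Blocks C π π'}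

/-- The set of (myopically) stable partitions. -/
def StableSet (P : CFP N) : Set (Partn N) :=
  {π | π ∈ P.adm ∧ ¬ ∃ C π', P.Blocks C π π' ∧ π'.HasCoal C}

/-- `V` is a top-partition collection: it consists exactly of the `|V|`-best
partitions of every agent, i.e. every agent strictly prefers every member of `V`
to every admissible partition outside `V`. -/
def TopCollection (P : CFP N) (V : Set (Partn N)) : Prop :=
  V.Nonempty ∧ V ⊆ P.adm ∧
  ∀ i, ∀ π ∈ V, ∀ π' ∈ P.adm, π' ∉ V → P.spref i π π'

/-- Effectiveness of a top-partition collection. -/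
def Effective (P : CFP N) (V : Set (Partn N)) : Prop :=
  ∀ π ∈ V, ∀ π' ∈ V, π ≠ π' →
    ∃ S : Set N, S.Nonempty ∧ S ⊆ π.diff π' ∧ π.HasCoal S ∧ ∀ i ∈ S, P.spref i π π'

/-- Weak effectiveness of a top-partition collection. -/
def WeakEffective (P : CFP N) (V : Set (Partn N)) : Prop :=
  ∀ π ∈ V, ∀ π' ∈ V, π ≠ π' → ∀ C : Set N,
    π'.HasCoal C →
    (∀ i ∈ C, π'.cell i = C) →
    (∀ i, i ∉ C →
      (π.cell i ∩ C = ∅ → π'.cell i = π.cell i) ∧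
      ((π.cell i ∩ C).Nonempty → π'.cell i = {i})) →
    ∃ j ∈ C, P.spref j π π'

/-- Domination: `π'` dominates `π` iff some coalition formed in `π'` blocks `π` via `π'`. -/
def Dom (P : CFP N) (π' π : Partn N) : Prop :=
  ∃ C, P.Blocks C π π' ∧ π'.HasCoal C

/-- Absorbing set for the myopic domination relation. -/
def Absorbing (P : CFP N) (A : Set (Partn N)) : Prop :=
  A.Nonempty ∧ A ⊆ P.adm ∧
  ∀ π ∈ A, ∀ π' ∈ P.adm, π' ≠ π → (Relation.TransGen P.Dom π' π ↔ π' ∈ A)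

/-- Weak-myopic blocking (condition (iii) of myopic blocking is dropped). -/
def WeakBlocks (P : CFP N) (C : Set N) (π π' : Partn N) : Prop :=
  π ∈ P.adm ∧ π' ∈ P.adm ∧ C.Nonempty ∧
  (∀ i ∈ C, P.pref i π' π) ∧
  (∃ j ∈ C, P.spref j π' π) ∧
  (∀ j, π.cell j ∩ C = ∅ → π'.cell j = π.cell j)

/-- The weak myopic core. -/
def WeakCore (P : CFP N) : Set (Partn N) :=
  {π | π ∈ P.adm ∧ ¬ ∃ C π', P.WeakBlocks C π π'}

/-- `Q` is the problem without externalities induced by the order-preserving problem `P`. -/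
def Induces (P Q : CFP N) : Prop :=
  Q.adm = P.adm ∧
  ∀ i, ∀ π ∈ P.adm, ∀ π' ∈ P.adm,
    (π.cell i = π'.cell i → Q.pref i π π' ∧ Q.pref i π' π) ∧
    (π.cell i ≠ π'.cell i → (P.spref i π π' ↔ Q.spref i π π'))

/-- Prudent blocking: every member of `C` compares `π` with her *worst* partition
placing her in `π'`'s coalition (equivalently, with all such partitions). -/
def PrudentBlocks (P : CFP N) (C : Set N) (π π' : Partn N) : Prop :=
  π ∈ P.adm ∧ π' ∈ P.adm ∧ C.Nonempty ∧
  (∀ i ∈ C, ∀ τ ∈ P.adm, τ.cell i = π'.cell i → P.pref i τ π) ∧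
  (∃ j ∈ C, ∀ τ ∈ P.adm, τ.cell j = π'.cell j → P.spref j τ π)

/-- Optimistic blocking: every member of `C` compares `π` with her *best* partition
placing her in `π'`'s coalition (equivalently, with some such partition). -/
def OptBlocks (P : CFP N) (C : Set N) (π π' : Partn N) : Prop :=
  π ∈ P.adm ∧ π' ∈ P.adm ∧ C.Nonempty ∧
  (∀ i ∈ C, ∃ τ ∈ P.adm, τ.cell i = π'.cell i ∧ P.pref i τ π) ∧
  (∃ j ∈ C, ∃ τ ∈ P.adm, τ.cell j = π'.cell j ∧ P.spref j τ π)

def PrudentDom (P : CFP N) (π' π : Partn N) : Prop :=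
  ∃ C, P.PrudentBlocks C π π' ∧ π'.HasCoal C

def OptDom (P : CFP N) (π' π : Partn N) : Prop :=
  ∃ C, P.OptBlocks C π π' ∧ π'.HasCoal C

def PrudentAbsorbing (P : CFP N) (A : Set (Partn N)) : Prop :=
  A.Nonempty ∧ A ⊆ P.adm ∧
  ∀ π ∈ A, ∀ π' ∈ P.adm, π' ≠ π → (Relation.TransGen P.PrudentDom π' π ↔ π' ∈ A)

def OptAbsorbing (P : CFP N) (A : Set (Partn N)) : Prop :=
  A.Nonempty ∧ A ⊆ P.adm ∧
  ∀ π ∈ A, ∀ π' ∈ P.adm, π' ≠ π → (Relation.TransGen P.OptDom π' π ↔ π' ∈ A)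

end CFP

/-!
Every member `π` of an effective top-partition collection `V` is in the core. A blocking
partition `π'` must lie in `V`, since some blocker strictly prefers `π'` to `π` while
everybody ranks `V` above every admissible partition outside it. Effectiveness then
yields a coalition `S` of `π` whose members all strictly prefer `π` to `π'` and are
placed differently by `π'`. Coalitions disjoint from the blocking coalition `C` persist,
so `S` meets `C`, and a member of `S ∩ C` weakly prefers `π'`: a contradiction.
-/

namespace Partn

variable {N : Type*}

theorem cell_eq_of_hasCoal {π : Partn N} {S : Set N} (hS : π.HasCoal S) {i : N}
    (hi : i ∈ S) : π.cell i = S := by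
  obtain ⟨k, rfl⟩ := hS
  exact π.cell_eq k i hi

end Partn

namespace CFP

variable {N : Type*} {P : CFP N} {C : Set N} {π π' : Partn N}

theorem Blocks.ne (h : P.Blocks C π π') : π ≠ π' := by
  obtain ⟨-, -, -, -, ⟨j, -, hj⟩, -⟩ := h
  rintro rfl
  exact hj.2 hj.1

theorem Blocks.inter_nonempty_of_cell_ne (h : P.Blocks C π π') {i : N}
    (hi : π.cell i ≠ π'.cell i) : (π.cell i ∩ C).Nonempty := by
  obtain ⟨-, -, -, -, -, -, hfix⟩ := h
  rw [Set.nonempty_iff_ne_empty]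
  exact fun hempty => hi (hfix i hempty).symm

theorem Blocks.mem_of_topCollection {V : Set (Partn N)} (hV : P.TopCollection V)
    (h : P.Blocks C π π') (hπ : π ∈ V) : π' ∈ V := by
  obtain ⟨-, hπ', -, -, ⟨j, -, hj⟩, -⟩ := h
  by_contra hπ'V
  exact (hV.2.2 j π hπ π' hπ' hπ'V).2 hj.1

theorem Effective.not_blocks {V : Set (Partn N)} (he : P.Effective V) (hπ : π ∈ V)
    (hπ' : π' ∈ V) (h : P.Blocks C π π') : False := by
  obtain ⟨S, ⟨i, hiS⟩, hSdiff, hScoal, hSpref⟩ := he π hπ π' hπ' h.ne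
  obtain ⟨m, hm, hmC⟩ := h.inter_nonempty_of_cell_ne (hSdiff hiS)
  rw [Partn.cell_eq_of_hasCoal hScoal hiS] at hm
  obtain ⟨-, -, -, hweak, -⟩ := h
  exact (hSpref m hm).2 (hweak m hmC)

theorem TopCollection.subset_core {V : Set (Partn N)} (hV : P.TopCollection V)
    (he : P.Effective V) : V ⊆ P.Core := by
  rintro π hπ
  refine ⟨hV.2.1 hπ, ?_⟩
  rintro ⟨C, π', h⟩
  exact he.not_blocks hπ (h.mem_of_topCollection hV hπ) h

end CFP

theorem core_nonempty_general {N : Type*} (P : CFP N)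
    (V : Set (Partn N)) (hV : P.TopCollection V) (he : P.Effective V) :
    P.Core.Nonempty :=
  hV.1.mono (hV.subset_core he)

/-- with unrestricted preferences, the existence of an effective
top-partition collection implies that the core is nonempty. -/
theorem core_nonempty {N : Type*} (P : CFP N) (hP : P.NoTies)
    (V : Set (Partn N)) (hV : P.TopCollection V) (he : P.Effective V) :
    P.Core.Nonempty :=
  core_nonempty_general P V hV he
end

section
/- Let (K,≿) be a problem with order-preserving preferences whose induced problem without externalities has a nonempty stable set. Then (K,≿) itself has a nonempty stable set. -/
/-! A partition dominated in `P` is dominated in `R` by the same move, so stability in `R`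
implies stability in `P`. The member who strictly gains must change coalition (otherwise the
move leaves the partition unchanged), so her strict preference carries over to `R`; any other
member either keeps her coalition, and is then indifferent in `R`, or changes it, and then, `P`
having no ties, her weak preference is strict and carries over as well. -/

lemma Partn.ext_cell {N : Type*} {π π' : Partn N} (h : π.cell = π'.cell) : π = π' := by
  cases π; cases π'; simp_all

lemma Partn.cell_eq_of_hasCoal_s18 {N : Type*} {π : Partn N} {C : Set N} (hC : π.HasCoal C)
    {i : N} (hi : i ∈ C) : π.cell i = C := by
  obtain ⟨k, rfl⟩ := hC
  exact π.cell_eq k i hi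

lemma Partn.eq_of_hasCoal_of_cell_eq {N : Type*} {π π' : Partn N} {C : Set N}
    (hC : π'.HasCoal C) {j : N} (hj : j ∈ C) (hcell : π.cell j = π'.cell j)
    (hout : ∀ m, π.cell m ∩ C = ∅ → π'.cell m = π.cell m) : π' = π := by
  have hπj : π.cell j = C := hcell.trans (Partn.cell_eq_of_hasCoal_s18 hC hj)
  have hπC : ∀ i ∈ C, π.cell i = C := fun i hi =>
    (π.cell_eq j i (hπj ▸ hi)).trans hπj
  refine Partn.ext_cell (funext fun m => ?_)
  by_cases hm : m ∈ C
  · rw [Partn.cell_eq_of_hasCoal_s18 hC hm, hπC m hm]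
  · refine hout m (Set.eq_empty_of_forall_notMem fun x ⟨hx, hxC⟩ => hm ?_)
    rw [← hπC x hxC, π.cell_eq m x hx]
    exact π.mem_cell m

namespace CFP

variable {N : Type*} {P R : CFP N} {C : Set N} {π π' : Partn N}

lemma Blocks.cell_ne_of_spref (hB : P.Blocks C π π') (hC : π'.HasCoal C) {j : N}
    (hj : j ∈ C) (hjs : P.spref j π' π) : π.cell j ≠ π'.cell j := by
  intro hcell
  obtain rfl := Partn.eq_of_hasCoal_of_cell_eq hC hj hcell hB.2.2.2.2.2.2
  exact hjs.2 hjs.1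

lemma Induces.spref_of_cell_ne (hInd : P.Induces R) (hπ : π ∈ P.adm) (hπ' : π' ∈ P.adm)
    {i : N} (hcell : π.cell i ≠ π'.cell i) (hs : P.spref i π' π) : R.spref i π' π :=
  ((hInd.2 i π' hπ' π hπ).2 (Ne.symm hcell)).mp hs

lemma Induces.pref_of_pref (hNT : P.NoTies) (hInd : P.Induces R) (hπ : π ∈ P.adm)
    (hπ' : π' ∈ P.adm) {i : N} (hp : P.pref i π' π) : R.pref i π' π := by
  by_cases hcell : π.cell i = π'.cell i
  · exact ((hInd.2 i π' hπ' π hπ).1 hcell.symm).1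
  · have hs : P.spref i π' π :=
      ⟨hp, fun hp' => hcell (hNT i π' hπ' π hπ hp hp').symm⟩
    exact (hInd.spref_of_cell_ne hπ hπ' hcell hs).1

lemma Induces.dom (hNT : P.NoTies) (hInd : P.Induces R) (hD : P.Dom π' π) :
    R.Dom π' π := by
  obtain ⟨C, hB, hC⟩ := hD
  have ⟨hπ, hπ', hne, hpref, ⟨j, hj, hjs⟩, hleave, hstay⟩ := hB
  refine ⟨C, ⟨hInd.1 ▸ hπ, hInd.1 ▸ hπ', hne, fun i hi => ?_, ⟨j, hj, ?_⟩, hleave, hstay⟩, hC⟩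
  · exact hInd.pref_of_pref hNT hπ hπ' (hpref i hi)
  · exact hInd.spref_of_cell_ne hπ hπ' (hB.cell_ne_of_spref hC hj hjs) hjs

lemma Induces.stableSet_subset (hNT : P.NoTies) (hInd : P.Induces R) :
    R.StableSet ⊆ P.StableSet := by
  rintro π ⟨hπ, hstable⟩
  refine ⟨hInd.1 ▸ hπ, fun ⟨C, π', hD⟩ => ?_⟩
  obtain ⟨C', hB', hC'⟩ := hInd.dom hNT ⟨C, hD⟩
  exact hstable ⟨C', π', hB', hC'⟩

end CFP

theorem stable_nonempty_of_induced {N : Type*} (P R : CFP N)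
    (hP : P.OrderPreserving) (hInd : CFP.Induces P R)
    (hne : R.StableSet.Nonempty) : P.StableSet.Nonempty :=
  hne.mono (hInd.stableSet_subset hP.1)
end
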